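/- With Ω, F, H_j as in the Dubins example and forecasts p_F = 1/2, p_j = 1, score the unconditional forecast for F by Brier score and the conditional forecast given H_j by 2^{−j−1} times Brier score. Then there is no rival set of forecasts q_F, {q_j} and no ε > 0 such that for all ω: 1/4 + Σ_j H_j(ω)2^{−j−1}[1 − F(ω)]² ≥ [q_F − F(ω)]² + Σ_j H_j(ω)2^{−j−1}[q_j − F(ω)]² + ε. -/
import Mathlib


/- The Dubins example: `Ω = Bool × ℕ`, with `ω_{2j} = (true, j)` and
`ω_{1j} = (false, j)`; `F = {ω_{2j} : j}`, `H_j = {ω_{1j}, ω_{2j}}`.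
The paper's partition index `j ≥ 1` corresponds to Lean's `j : ℕ` via
`j ↦ j + 1`, so the paper's weight `2^{-j-1}` becomes `2^{-j-2}`. -/

/-- Indicator of `F`. -/
def indF (ω : Bool × ℕ) : ℝ := if ω.1 then 1 else 0

/-- Indicator of `H_j`. -/
def indH (j : ℕ) (ω : Bool × ℕ) : ℝ := if ω.2 = j then 1 else 0

/-- The weight `2^{-j-1}` (paper indexing) for the conditional score given `H_j`. -/
noncomputable def wt (j : ℕ) : ℝ := (2:ℝ) ^ (-(j:ℤ) - 2)

/-- with forecasts `p_F = 1/2`, `p_j = 1`, the unconditional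
forecast scored by Brier score and the conditional forecast given `H_j`
scored by `2^{-j-1}` times Brier score (a family failing uniform similarity),
no rival set of forecasts uniformly strictly dominates the sum of scores. -/
theorem dubins_weighted_brier_not_dominated :
    ¬ ∃ (qF : ℝ) (q : ℕ → ℝ) (ε : ℝ), 0 < ε ∧
      ∀ ω : Bool × ℕ,
        (qF - indF ω)^2 + (∑' j : ℕ, indH j ω * wt j * (q j - indF ω)^2) + ε
          ≤ 1/4 + (∑' j : ℕ, indH j ω * wt j * (1 - indF ω)^2) := by
  rintro ⟨qF, q, ε, hε, h⟩
  obtain ⟨n, hn⟩ := exists_pow_lt_of_lt_one hε (by norm_num : (1:ℝ)/2 < 1)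
  have hwt0 : 0 < wt n := by rw [wt]; positivity
  have hwtle : wt n ≤ ε := by
    have h1 : wt n ≤ ((1:ℝ)/2)^n := by
      have : wt n = ((1:ℝ)/2)^(n+2) := by
        simp [wt, one_div, ← zpow_neg, ← zpow_natCast]
        ring_nf
      rw [this]
      exact pow_le_pow_of_le_one (by norm_num) (by norm_num) (by omega)
    linarith
  have key : ∀ (b : Bool) (c : ℕ → ℝ),
      (∑' j : ℕ, indH j (b, n) * wt j * c j) = wt n * c n := by
    intro b c
    rw [tsum_eq_single n]
    · simp [indH]
    · intro j hj
      simp [indH, Ne.symm hj]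
  have h1 := h (false, n)
  have h2 := h (true, n)
  rw [key, key] at h1 h2
  simp only [indF] at h1 h2
  norm_num at h1 h2
  nlinarith [sq_nonneg (2*qF - 1), sq_nonneg (q n), sq_nonneg (q n - 1),
    mul_nonneg hwt0.le (sq_nonneg (q n)), mul_nonneg hwt0.le (sq_nonneg (q n - 1))]
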